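/- Sequential composition of metric uncertainty relations: if {U^{(1)}_{k₁}} on A₁⊗B₁ satisfies a (t₁, ε₁)-metric uncertainty relation on A₁, and {U^{(2)}_{k₂}} on B₁ = A₂⊗B₂ satisfies a (t₂, ε₂)-metric uncertainty relation on A₂, then the family {(1_{A₁} ⊗ U^{(2)}_{k₂})·U^{(1)}_{k₁}} of t₁t₂ unitaries satisfies a (t₁t₂, ε₁+ε₂)-metric uncertainty relation on A₁⊗A₂. -/

import Mathlib

/-!
Fix `k₁`, put `w = U¹_{k₁} ψ` and let `q` be the `A₁`-marginal of `|w|²`. The operator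
`1 ⊗ U²_{k₂}` acts on each slice `w(a₁, ·)` separately, and the second relation is homogeneous of
degree two in the state, so on average over `k₂` the `A₂`-marginal of slice `a₁` is within
`ε₂ q(a₁)` of `q(a₁)` times uniform; summing over `a₁` costs `ε₂`. The triangle inequality then
compares `q ⊗ unif` with `unif ⊗ unif` at the price of the distance of `q` from uniform, which is
at most `ε₁` on average over `k₁`.
-/

open Matrix
open scoped Kronecker

lemma Matrix.norm_toLp_mulVec_of_mem_unitaryGroup {n : Type*} [Fintype n] [DecidableEq n]
    {U : Matrix n n ℂ} (hU : U ∈ unitaryGroup n ℂ) (x : n → ℂ) :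
    ‖WithLp.toLp 2 (U *ᵥ x)‖ = ‖WithLp.toLp 2 x‖ := by
  rw [← toEuclideanCLM_toLp]
  exact ContinuousLinearMap.norm_map_of_mem_unitary (Unitary.map_mem toEuclideanCLM hU) _

lemma Matrix.one_kronecker_mulVec_apply {R α ι : Type*} [CommSemiring R] [Fintype α]
    [DecidableEq α] [Fintype ι] (B : Matrix ι ι R) (w : α × ι → R) (a : α) (i : ι) :
    ((1 : Matrix α α R) ⊗ₖ B *ᵥ w) (a, i) = (B *ᵥ fun j => w (a, j)) i := by
  simp [mulVec, dotProduct, Fintype.sum_prod_type, one_apply, ite_mul]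

lemma sum_one_div_mul_le {n : ℕ} {a : ℝ} (ha : 0 ≤ a) : ∑ _i : Fin n, 1 / (n : ℝ) * a ≤ a := by
  rw [Finset.sum_const, Finset.card_univ, Fintype.card_fin, nsmul_eq_mul, ← mul_assoc]
  exact mul_le_of_le_one_left ha (by rw [mul_one_div]; exact div_self_le_one _)

lemma average_add_le {t : ℕ} (f : Fin t → ℝ) {c : ℝ} (hc : 0 ≤ c) :
    1 / (t : ℝ) * ∑ k, (f k + c) ≤ 1 / (t : ℝ) * ∑ k, f k + c := by
  rw [Finset.sum_add_distrib, mul_add, Finset.mul_sum (s := Finset.univ) (f := fun _ => c)]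
  exact add_le_add_right (sum_one_div_mul_le hc) _

lemma sum_abs_sub_one_div_mul_le {n : ℕ} (x : Fin n → ℝ) (y z : ℝ) :
    ∑ i, |x i - 1 / n * y| ≤ ∑ i, |x i - 1 / n * z| + |z - y| :=
  calc ∑ i, |x i - 1 / n * y| ≤ ∑ i, (|x i - 1 / n * z| + 1 / n * |z - y|) := by
        gcongr with i
        calc |x i - 1 / n * y| ≤ |x i - 1 / n * z| + |1 / n * z - 1 / n * y| := abs_sub_le _ _ _
          _ = |x i - 1 / n * z| + 1 / n * |z - y| := by
            rw [← mul_sub, abs_mul, abs_of_nonneg (a := 1 / (n : ℝ)) (by positivity)]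
    _ ≤ ∑ i, |x i - 1 / n * z| + |z - y| := by
        rw [Finset.sum_add_distrib]
        exact add_le_add_right (sum_one_div_mul_le (abs_nonneg _)) _

lemma average_sum_abs_sub_le_mul_norm_sq {α β : Type*} [Fintype α] [Fintype β] {t : ℕ}
    (U : Fin t → Matrix (α × β) (α × β) ℂ) (c ε : ℝ)
    (hU : ∀ ψ : EuclideanSpace ℂ (α × β), ‖ψ‖ = 1 →
      1 / (t : ℝ) * ∑ k, 1 / 2 * ∑ a, |∑ b, ‖(U k *ᵥ ψ) (a, b)‖ ^ 2 - c| ≤ ε)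
    (v : EuclideanSpace ℂ (α × β)) :
    1 / (t : ℝ) * ∑ k, 1 / 2 * ∑ a, |∑ b, ‖(U k *ᵥ v) (a, b)‖ ^ 2 - c * ‖v‖ ^ 2|
      ≤ ε * ‖v‖ ^ 2 := by
  rcases eq_or_ne v 0 with rfl | hv
  · simp
  have hv2 : 0 < ‖v‖ ^ 2 := by positivity
  set ψ : EuclideanSpace ℂ (α × β) := (‖v‖⁻¹ : ℂ) • v
  have hscale : ∀ k a, |∑ b, ‖(U k *ᵥ ψ) (a, b)‖ ^ 2 - c|
      = (‖v‖ ^ 2)⁻¹ * |∑ b, ‖(U k *ᵥ v) (a, b)‖ ^ 2 - c * ‖v‖ ^ 2| := by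
    intro k a
    simp only [ψ, WithLp.ofLp_smul, mulVec_smul, Pi.smul_apply, norm_smul, norm_inv,
      Complex.norm_real, norm_norm, mul_pow, ← Finset.mul_sum]
    rw [← abs_of_pos (inv_pos.mpr hv2), ← abs_mul, inv_pow, mul_sub, mul_comm c,
      inv_mul_cancel_left₀ hv2.ne']
  calc _ = ‖v‖ ^ 2 * (1 / (t : ℝ) * ∑ k, 1 / 2 * ∑ a, |∑ b, ‖(U k *ᵥ ψ) (a, b)‖ ^ 2 - c|) := by
        simp only [hscale, ← Finset.mul_sum, mul_left_comm _ (‖v‖ ^ 2)⁻¹]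
        rw [inv_mul_cancel_left₀ hv2.ne']
    _ ≤ ‖v‖ ^ 2 * ε := by gcongr; exact hU ψ (norm_smul_inv_norm hv)
    _ = ε * ‖v‖ ^ 2 := mul_comm _ _

lemma average_sum_abs_one_kronecker_mulVec_sub_le {α β : Type*} [Fintype α] [DecidableEq α]
    [Fintype β] {d t : ℕ} (U : Fin t → Matrix (Fin d × β) (Fin d × β) ℂ) (c ε : ℝ)
    (hU : ∀ ψ : EuclideanSpace ℂ (Fin d × β), ‖ψ‖ = 1 →
      1 / (t : ℝ) * ∑ k, 1 / 2 * ∑ a, |∑ b, ‖(U k *ᵥ ψ) (a, b)‖ ^ 2 - 1 / (d : ℝ)| ≤ ε)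
    (w : EuclideanSpace ℂ (α × (Fin d × β))) (hw : ‖w‖ = 1) :
    1 / (t : ℝ) * ∑ k, 1 / 2 * ∑ a₁, ∑ a₂,
        |∑ b, ‖((1 : Matrix α α ℂ) ⊗ₖ U k *ᵥ w) (a₁, (a₂, b))‖ ^ 2 - 1 / d * c|
      ≤ ε + 1 / 2 * ∑ a₁, |∑ b₁, ‖w (a₁, b₁)‖ ^ 2 - c| := by
  set slice : α → EuclideanSpace ℂ (Fin d × β) := fun a₁ => WithLp.toLp 2 fun b₁ => w (a₁, b₁)
  set q : α → ℝ := fun a₁ => ‖slice a₁‖ ^ 2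
  have hq : ∑ a₁, q a₁ = 1 := by
    simp only [q, EuclideanSpace.norm_sq_eq, slice]
    rw [← Fintype.sum_prod_type', ← EuclideanSpace.norm_sq_eq, hw, one_pow]
  have hmarginal : ∀ a₁, ∑ b₁, ‖w (a₁, b₁)‖ ^ 2 = q a₁ := fun a₁ =>
    (EuclideanSpace.norm_sq_eq (slice a₁)).symm
  simp only [one_kronecker_mulVec_apply, hmarginal]
  calc _ ≤ 1 / (t : ℝ) * ∑ k, (1 / 2 * ∑ a₁, ∑ a₂,
          |∑ b, ‖(U k *ᵥ slice a₁) (a₂, b)‖ ^ 2 - 1 / d * q a₁| + 1 / 2 * ∑ a₁, |q a₁ - c|) := by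
        gcongr with k
        rw [← mul_add, ← Finset.sum_add_distrib]
        gcongr with a₁
        exact sum_abs_sub_one_div_mul_le _ _ _
    _ ≤ 1 / (t : ℝ) * ∑ k, 1 / 2 * ∑ a₁, ∑ a₂,
          |∑ b, ‖(U k *ᵥ slice a₁) (a₂, b)‖ ^ 2 - 1 / d * q a₁| + 1 / 2 * ∑ a₁, |q a₁ - c| :=
        average_add_le _ (by positivity)
    _ = ∑ a₁, 1 / (t : ℝ) * ∑ k, 1 / 2 * ∑ a₂,
          |∑ b, ‖(U k *ᵥ slice a₁) (a₂, b)‖ ^ 2 - 1 / d * q a₁| + 1 / 2 * ∑ a₁, |q a₁ - c| := by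
        simp only [Finset.mul_sum]
        rw [Finset.sum_comm]
    _ ≤ ∑ a₁, ε * q a₁ + 1 / 2 * ∑ a₁, |q a₁ - c| := by
        gcongr ?_ + _
        exact Finset.sum_le_sum fun a₁ _ => average_sum_abs_sub_le_mul_norm_sq U _ ε hU _
    _ = ε + 1 / 2 * ∑ a₁, |q a₁ - c| := by rw [← Finset.mul_sum, hq, mul_one]

theorem stmt10 (dA1 dA2 dB2 t1 t2 : ℕ)
    (ε1 ε2 : ℝ) (hε2 : 0 ≤ ε2)
    (U1 : Fin t1 → Matrix (Fin dA1 × (Fin dA2 × Fin dB2))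
                          (Fin dA1 × (Fin dA2 × Fin dB2)) ℂ)
    (U2 : Fin t2 → Matrix (Fin dA2 × Fin dB2) (Fin dA2 × Fin dB2) ℂ)
    (hU1 : ∀ k, U1 k ∈ Matrix.unitaryGroup (Fin dA1 × (Fin dA2 × Fin dB2)) ℂ)
    (hMUR1 : ∀ ψ : EuclideanSpace ℂ (Fin dA1 × (Fin dA2 × Fin dB2)), ‖ψ‖ = 1 →
      (1 / (t1 : ℝ)) * ∑ k1, (1 / 2) * ∑ a1 : Fin dA1,
          |(∑ b1 : Fin dA2 × Fin dB2, ‖(U1 k1).mulVec ψ (a1, b1)‖ ^ 2)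
            - 1 / (dA1 : ℝ)| ≤ ε1)
    (hMUR2 : ∀ ψ : EuclideanSpace ℂ (Fin dA2 × Fin dB2), ‖ψ‖ = 1 →
      (1 / (t2 : ℝ)) * ∑ k2, (1 / 2) * ∑ a2 : Fin dA2,
          |(∑ b2 : Fin dB2, ‖(U2 k2).mulVec ψ (a2, b2)‖ ^ 2) - 1 / (dA2 : ℝ)| ≤ ε2) :
    ∀ ψ : EuclideanSpace ℂ (Fin dA1 × (Fin dA2 × Fin dB2)), ‖ψ‖ = 1 →
      (1 / ((t1 : ℝ) * t2)) * ∑ k1, ∑ k2, (1 / 2) *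
          ∑ a1 : Fin dA1, ∑ a2 : Fin dA2,
            |(∑ b2 : Fin dB2,
                ‖(((1 : Matrix (Fin dA1) (Fin dA1) ℂ) ⊗ₖ U2 k2) * U1 k1).mulVec ψ
                    (a1, (a2, b2))‖ ^ 2)
              - 1 / ((dA1 : ℝ) * dA2)| ≤ ε1 + ε2 := by
  intro ψ hψ
  have hsecond := fun k1 => average_sum_abs_one_kronecker_mulVec_sub_le U2 (1 / (dA1 : ℝ)) ε2
    hMUR2 (WithLp.toLp 2 (U1 k1 *ᵥ ψ))
    (by rw [norm_toLp_mulVec_of_mem_unitaryGroup (hU1 k1), WithLp.toLp_ofLp, hψ])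
  rw [← one_div_mul_one_div (t1 : ℝ), mul_comm (dA1 : ℝ), ← one_div_mul_one_div (dA2 : ℝ),
    mul_assoc, Finset.mul_sum]
  simp only [← mulVec_mulVec]
  calc _ ≤ 1 / (t1 : ℝ) * ∑ k1,
          (1 / 2 * ∑ a1, |∑ b1, ‖(U1 k1 *ᵥ ψ) (a1, b1)‖ ^ 2 - 1 / (dA1 : ℝ)| + ε2) := by
        gcongr with k1
        rw [add_comm]
        exact hsecond k1
    _ ≤ ε1 + ε2 := (average_add_le _ hε2).trans (by gcongr; exact hMUR1 ψ hψ)
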